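/- arXiv:math/0311357 — 3 statements merged into one kernel-verified Lean document; each statement's English description precedes it below -/
import Mathlib

section
/- Let M > 1 be real with integer part k = ⌊M⌋ ≥ 1 and fractional part δ = M - k ∈ [0,1). Then F(k+1, M) ≥ F(k, M) if and only if δ ≤ f(k), where F(n, M) = ln n + M/n and f(k) = k((k+1) ln((k+1)/k) - 1). -/
noncomputable def f (k : ℝ) : ℝ := k * ((k + 1) * Real.log ((k + 1) / k) - 1)

noncomputable def F (n : ℕ) (M : ℝ) : ℝ := Real.log n + M / n

theorem floor_vs_ceil (M : ℝ) (hM : 1 < M) :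
    F (⌊M⌋₊ + 1) M ≥ F ⌊M⌋₊ M ↔ M - ⌊M⌋₊ ≤ f (⌊M⌋₊ : ℝ) := by
  have hk' : 1 ≤ ⌊M⌋₊ := Nat.le_floor (by exact_mod_cast hM.le)
  set k : ℝ := (⌊M⌋₊ : ℝ) with hkdef
  have hk : (1:ℝ) ≤ k := by rw [hkdef]; exact_mod_cast hk'
  have hk0 : (0:ℝ) < k := by linarith
  have hk1 : (0:ℝ) < k + 1 := by linarith
  have hcast : ((⌊M⌋₊ + 1 : ℕ) : ℝ) = k + 1 := by push_cast [hkdef]; ring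
  simp only [F, f, hcast]
  rw [← hkdef]
  rw [Real.log_div (by linarith) (by linarith)]
  have hd : M / k - M / (k + 1) = M / (k * (k + 1)) := by
    field_simp
    ring
  constructor
  · intro h
    have h2 : M / (k * (k + 1)) ≤ Real.log (k + 1) - Real.log k := by
      rw [← hd]
      simp only [ge_iff_le] at h
      linarith
    have h3 := (div_le_iff₀ (by positivity)).mp h2
    nlinarith [h3]
  · intro h
    have h3 : M ≤ (Real.log (k + 1) - Real.log k) * (k * (k + 1)) := by nlinarith
    have h2 := (div_le_iff₀ (by positivity)).mpr h3
    rw [← hd] at h2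
    simp only [ge_iff_le]
    linarith
end

section
/- Let M > 1 with k = ⌊M⌋ and δ = M - k. If δ ≤ f(k) then F(k, M) ≤ F(n, M) for all positive integers n, and if δ > f(k) then F(k+1, M) ≤ F(n, M) for all positive integers n; here F(n, M) = ln n + M/n and f(k) = k((k+1)ln((k+1)/k) - 1). -/
lemma g_anti {M a b : ℝ} (ha : 0 < a) (hab : a ≤ b) (hbM : b ≤ M) :
    Real.log b + M / b ≤ Real.log a + M / a := by
  have hb : 0 < b := lt_of_lt_of_le ha hab
  have hlog : a * (Real.log b - Real.log a) ≤ b - a := by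
    have h1 : Real.log (b / a) ≤ b / a - 1 := Real.log_le_sub_one_of_pos (div_pos hb ha)
    rw [Real.log_div hb.ne' ha.ne'] at h1
    have h2 := mul_le_mul_of_nonneg_left h1 ha.le
    calc a * (Real.log b - Real.log a) ≤ a * (b / a - 1) := h2
      _ = b - a := by field_simp
  have hu : a * (M / a) = M := by field_simp
  have hv : b * (M / b) = M := by field_simp
  nlinarith [mul_pos ha hb, mul_le_mul_of_nonneg_left hlog hb.le,
    mul_nonneg (sub_nonneg.mpr hbM) (sub_nonneg.mpr hab)]

lemma g_mono {M a b : ℝ} (ha : 0 < a) (hMa : M ≤ a) (hab : a ≤ b) :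
    Real.log a + M / a ≤ Real.log b + M / b := by
  have hb : 0 < b := lt_of_lt_of_le ha hab
  have hlog : b - a ≤ b * (Real.log b - Real.log a) := by
    have h1 : Real.log (a / b) ≤ a / b - 1 := Real.log_le_sub_one_of_pos (div_pos ha hb)
    rw [Real.log_div ha.ne' hb.ne'] at h1
    have h2 := mul_le_mul_of_nonneg_left h1 hb.le
    have : b * (Real.log a - Real.log b) ≤ a - b := by
      calc b * (Real.log a - Real.log b) ≤ b * (a / b - 1) := h2
        _ = a - b := by field_simp
    linarith
  have hu : a * (M / a) = M := by field_simp
  have hv : b * (M / b) = M := by field_simp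
  nlinarith [mul_pos ha hb, mul_le_mul_of_nonneg_left hlog ha.le,
    mul_nonneg (sub_nonneg.mpr hMa) (sub_nonneg.mpr hab)]

theorem integer_minimizer (M : ℝ) (hM : 1 < M) :
    (M - ⌊M⌋₊ ≤ f (⌊M⌋₊ : ℝ) →
      ∀ n : ℕ, 1 ≤ n → F ⌊M⌋₊ M ≤ F n M) ∧
    (M - ⌊M⌋₊ > f (⌊M⌋₊ : ℝ) →
      ∀ n : ℕ, 1 ≤ n → F (⌊M⌋₊ + 1) M ≤ F n M) := by
  set k := ⌊M⌋₊ with hkdef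
  have hM0 : (0:ℝ) ≤ M := by linarith
  have hk1 : 1 ≤ k := Nat.le_floor (by exact_mod_cast hM.le)
  have hk1' : (1:ℝ) ≤ (k:ℝ) := by exact_mod_cast hk1
  have hk0 : (0:ℝ) < (k:ℝ) := by linarith
  have hkM : (k:ℝ) ≤ M := Nat.floor_le hM0
  have hMk : M < (k:ℝ) + 1 := Nat.lt_floor_add_one M
  have hL : Real.log (((k:ℝ)+1)/(k:ℝ)) = Real.log ((k:ℝ)+1) - Real.log (k:ℝ) :=
    Real.log_div (by linarith) hk0.ne'
  have hkk : (0:ℝ) < (k:ℝ) * ((k:ℝ)+1) := by positivity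
  have hdiff : F (k+1) M - F k M
      = Real.log (((k:ℝ)+1)/(k:ℝ)) - M / ((k:ℝ) * ((k:ℝ)+1)) := by
    simp only [F]
    push_cast
    rw [hL]
    field_simp
    ring
  have hfk : f (k:ℝ) = (k:ℝ) * (((k:ℝ)+1) * Real.log (((k:ℝ)+1)/(k:ℝ)) - 1) := rfl
  constructor
  · intro h n hn
    have hn0 : (0:ℝ) < (n:ℝ) := by positivity
    have hMle : M ≤ (k:ℝ) * ((k:ℝ)+1) * Real.log (((k:ℝ)+1)/(k:ℝ)) := by
      rw [hfk] at h; nlinarith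
    have hcmp : F k M ≤ F (k+1) M := by
      have hdl : M / ((k:ℝ) * ((k:ℝ)+1)) ≤ Real.log (((k:ℝ)+1)/(k:ℝ)) :=
        (div_le_iff₀ hkk).mpr (by linarith)
      linarith [hdiff]
    rcases le_or_gt n k with hc | hc
    · have hc' : (n:ℝ) ≤ (k:ℝ) := by exact_mod_cast hc
      have := g_anti hn0 hc' hkM
      simpa [F] using this
    · have hkn : (k:ℝ)+1 ≤ (n:ℝ) := by exact_mod_cast hc
      have h2 := g_mono (by linarith : (0:ℝ) < (k:ℝ)+1) hMk.le hkn
      have h3 : F (k+1) M ≤ F n M := by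
        simp only [F]; push_cast; exact h2
      linarith
  · intro h n hn
    have hn0 : (0:ℝ) < (n:ℝ) := by positivity
    have hMgt : (k:ℝ) * ((k:ℝ)+1) * Real.log (((k:ℝ)+1)/(k:ℝ)) ≤ M := by
      rw [hfk] at h; nlinarith
    have hcmp : F (k+1) M ≤ F k M := by
      have hdl : Real.log (((k:ℝ)+1)/(k:ℝ)) ≤ M / ((k:ℝ) * ((k:ℝ)+1)) :=
        (le_div_iff₀ hkk).mpr (by linarith)
      linarith [hdiff]
    rcases le_or_gt n k with hc | hc
    · have hc' : (n:ℝ) ≤ (k:ℝ) := by exact_mod_cast hc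
      have h2 := g_anti hn0 hc' hkM
      have h3 : F k M ≤ F n M := by simpa [F] using h2
      linarith
    · have hkn : (k:ℝ)+1 ≤ (n:ℝ) := by exact_mod_cast hc
      have h2 := g_mono (by linarith : (0:ℝ) < (k:ℝ)+1) hMk.le hkn
      simp only [F]; push_cast; exact h2
end

section
/- With equal on-rates αᵢ = α and gain constraint (α/β)^n = Kℓ (so β = α (Kℓ)^{-1/n}), the signal-duration term σ₀(n) = n/β² = (1/α²)·n·(Kℓ)^{2/n} satisfies: σ₀ is minimized over positive integers n at n* = Ψ(2 ln(Kℓ)), where Ψ(M) = 1 for M ≤ 1, Ψ(M) = ⌊M⌋ if M > 1 and the fractional part δ_M ≤ f(⌊M⌋), and Ψ(M) = ⌈M⌉ otherwise, with f(k) = k((k+1)ln((k+1)/k) − 1). -/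
noncomputable def Psi (M : ℝ) : ℕ :=
  if M ≤ 1 then 1
  else if Int.fract M ≤ f (⌊M⌋₊ : ℝ) then ⌊M⌋₊ else ⌈M⌉₊

/-!
Write `n (Kℓ)^{2/n} = exp (log n + M / n)` with `M = 2 log (Kℓ)`. The step
`g(n+1) - g(n)` of `g(n) = log n + M / n` has the sign of `c(n) - M`, where
`c(x) = x (x+1) log ((x+1)/x)` lies in `[x, x+1]`. Hence `g` decreases while `n + 1 ≤ M`
and increases once `n ≥ M`; only the step from `⌊M⌋` to `⌊M⌋ + 1` depends on `M`, and
`δ_M ≤ f(⌊M⌋)` is exactly `M ≤ c(⌊M⌋)`.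
-/

open Real Set

theorem Nat.isMinOn_Ici_of_succ_le_of_le_succ {α : Type*} [Preorder α] {u : ℕ → α} {a t : ℕ}
    (hdown : ∀ m, a ≤ m → m < t → u (m + 1) ≤ u m) (hup : ∀ m, t ≤ m → u m ≤ u (m + 1)) :
    IsMinOn u (Ici a) t := by
  intro n (hn : a ≤ n)
  rcases le_total t n with htn | hnt
  · exact monotoneOn_nat_Ici_of_le_succ hup self_mem_Ici htn htn
  · exact Nat.decreasingInduction' (P := fun k ↦ u t ≤ u k)
      (fun k hkt hnk ih ↦ ih.trans (hdown k (hn.trans hnk) hkt)) hnt le_rfl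

noncomputable def crossover (x : ℝ) : ℝ := x * (x + 1) * log ((x + 1) / x)

lemma f_eq_crossover_sub (k : ℝ) : f k = crossover k - k := by
  unfold f crossover
  ring

lemma le_crossover {x : ℝ} (hx : 0 < x) : x ≤ crossover x := by
  have h := one_sub_inv_le_log_of_pos (div_pos (by linarith : 0 < x + 1) hx)
  rw [inv_div, one_sub_div (by positivity : x + 1 ≠ 0), add_sub_cancel_left] at h
  unfold crossover
  calc x = x * (x + 1) * (1 / (x + 1)) := by field_simp
    _ ≤ x * (x + 1) * log ((x + 1) / x) := by gcongr

lemma crossover_le {x : ℝ} (hx : 0 < x) : crossover x ≤ x + 1 := by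
  have h := log_le_sub_one_of_pos (div_pos (by linarith : 0 < x + 1) hx)
  rw [div_sub_one hx.ne', add_sub_cancel_left] at h
  unfold crossover
  calc x * (x + 1) * log ((x + 1) / x) ≤ x * (x + 1) * (1 / x) := by gcongr
    _ = x + 1 := by field_simp

noncomputable def logAddDiv (M : ℝ) (n : ℕ) : ℝ := log n + M / n

lemma logAddDiv_succ_sub {n : ℕ} (hn : 1 ≤ n) (M : ℝ) :
    logAddDiv M (n + 1) - logAddDiv M n = (crossover n - M) / (n * (n + 1)) := by
  have hn0 : (0 : ℝ) < n := by exact_mod_cast hn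
  unfold logAddDiv crossover
  rw [log_div (by positivity) hn0.ne']
  push_cast
  field_simp
  ring

lemma logAddDiv_le_succ_iff {n : ℕ} (hn : 1 ≤ n) (M : ℝ) :
    logAddDiv M n ≤ logAddDiv M (n + 1) ↔ M ≤ crossover n := by
  have hn0 : (0 : ℝ) < n := by exact_mod_cast hn
  rw [← sub_nonneg, logAddDiv_succ_sub hn, le_div_iff₀ (by positivity), zero_mul, sub_nonneg]

lemma logAddDiv_succ_le_iff {n : ℕ} (hn : 1 ≤ n) (M : ℝ) :
    logAddDiv M (n + 1) ≤ logAddDiv M n ↔ crossover n ≤ M := by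
  have hn0 : (0 : ℝ) < n := by exact_mod_cast hn
  rw [← sub_nonpos, logAddDiv_succ_sub hn, div_le_iff₀ (by positivity), zero_mul, sub_nonpos]

lemma isMinOn_logAddDiv_of_crossover {M : ℝ} {t : ℕ} (ht : 1 ≤ t)
    (hdown : ∀ m, 1 ≤ m → m < t → crossover m ≤ M) (hup : ∀ m, t ≤ m → M ≤ crossover m) :
    IsMinOn (logAddDiv M) (Ici 1) t :=
  Nat.isMinOn_Ici_of_succ_le_of_le_succ
    (fun m hm hmt ↦ (logAddDiv_succ_le_iff hm M).2 (hdown m hm hmt))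
    (fun m htm ↦ (logAddDiv_le_succ_iff (ht.trans htm) M).2 (hup m htm))

lemma Psi_of_one_lt {M : ℝ} (hM : 1 < M) :
    Psi M = if M ≤ crossover ⌊M⌋₊ then ⌊M⌋₊ else ⌊M⌋₊ + 1 := by
  have hM0 : 0 ≤ M := by linarith
  have hfract : Int.fract M = M - ⌊M⌋₊ := by
    rw [Int.fract, natCast_floor_eq_intCast_floor hM0]
  rw [Psi, if_neg hM.not_ge, hfract, f_eq_crossover_sub]
  simp only [sub_le_sub_iff_right]
  split_ifs with h
  · rfl
  · have hk : (0 : ℝ) < ⌊M⌋₊ := by exact_mod_cast Nat.floor_pos.2 hM.le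
    rw [Nat.ceil_eq_iff (Nat.succ_ne_zero _)]
    push_cast
    exact ⟨by simpa using (le_crossover hk).trans_lt (not_le.1 h), (Nat.lt_floor_add_one M).le⟩

lemma one_le_Psi (M : ℝ) : 1 ≤ Psi M := by
  rcases le_or_gt M 1 with hM | hM
  · rw [Psi, if_pos hM]
  · rw [Psi_of_one_lt hM]
    split_ifs <;> simp [hM.le]

lemma isMinOn_logAddDiv_Psi (M : ℝ) : IsMinOn (logAddDiv M) (Ici 1) (Psi M) := by
  rcases le_or_gt M 1 with hM | hM
  · rw [Psi, if_pos hM]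
    refine isMinOn_logAddDiv_of_crossover le_rfl (fun m hm hm1 ↦ by omega) fun m hm ↦ ?_
    exact hM.trans <| (Nat.one_le_cast.2 hm).trans (le_crossover (Nat.cast_pos.2 hm))
  set k := ⌊M⌋₊
  have hk : 1 ≤ k := Nat.le_floor (by simpa using hM.le)
  have below : ∀ m, 1 ≤ m → m < k → crossover m ≤ M := fun m hm hmk ↦ by
    have : (m : ℝ) + 1 ≤ k := by exact_mod_cast hmk
    linarith [crossover_le (x := m) (Nat.cast_pos.2 hm), Nat.floor_le (by linarith : 0 ≤ M)]
  have above : ∀ m, k < m → M ≤ crossover m := fun m hkm ↦ by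
    have : (k : ℝ) + 1 ≤ m := by exact_mod_cast hkm
    linarith [le_crossover (x := m) (by linarith), Nat.lt_floor_add_one M]
  rw [Psi_of_one_lt hM]
  split_ifs with h
  · refine isMinOn_logAddDiv_of_crossover hk below fun m hkm ↦ ?_
    rcases hkm.eq_or_lt with rfl | hkm
    exacts [h, above m hkm]
  · refine isMinOn_logAddDiv_of_crossover (by omega) (fun m hm hmk ↦ ?_) above
    rcases (Nat.lt_succ_iff.1 hmk).eq_or_lt with rfl | hmk
    exacts [(not_le.1 h).le, below m hm hmk]

lemma natCast_mul_rpow_two_div_eq_exp {x : ℝ} (hx : 0 < x) {n : ℕ} (hn : 1 ≤ n) :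
    (n : ℝ) * x ^ ((2 : ℝ) / n) = exp (logAddDiv (2 * log x) n) := by
  rw [rpow_def_of_pos hx, logAddDiv, exp_add, exp_log (by positivity)]
  ring_nf

theorem optimal_length_general (K ℓ α : ℝ) (hK : 0 < K) (hℓ : 0 < ℓ) :
    ∀ n : ℕ, 1 ≤ n →
      (1 / α^2) * (Psi (2 * Real.log (K * ℓ)) : ℝ) *
        (K * ℓ) ^ ((2:ℝ) / (Psi (2 * Real.log (K * ℓ)) : ℝ)) ≤
      (1 / α^2) * (n : ℝ) * (K * ℓ) ^ ((2:ℝ) / (n : ℝ)) := by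
  intro n hn
  have hKℓ : 0 < K * ℓ := mul_pos hK hℓ
  rw [mul_assoc, mul_assoc, natCast_mul_rpow_two_div_eq_exp hKℓ (one_le_Psi _),
    natCast_mul_rpow_two_div_eq_exp hKℓ hn]
  gcongr
  exact isMinOn_logAddDiv_Psi _ (mem_Ici.2 hn)

theorem optimal_length (K ℓ α : ℝ) (hK : 0 < K) (hℓ : 0 < ℓ) (hα : 0 < α) :
    ∀ n : ℕ, 1 ≤ n →
      (1 / α^2) * (Psi (2 * Real.log (K * ℓ)) : ℝ) *
        (K * ℓ) ^ ((2:ℝ) / (Psi (2 * Real.log (K * ℓ)) : ℝ)) ≤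
      (1 / α^2) * (n : ℝ) * (K * ℓ) ^ ((2:ℝ) / (n : ℝ)) :=
  optimal_length_general K ℓ α hK hℓ
end
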